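/- arXiv:1703.06327 — 3 statements merged into one kernel-verified Lean document; each statement's English description precedes it below -/
import Mathlib

section
/- Let u_1, …, u_r be independent Rademacher variables, let V ⊆ [r] with |V| = v, and let λ > 0 satisfy 50 λ² v / d² ≤ 2^{-5} (i.e., (5/d)² λ² ≤ 2^{-8}/v). Then E[exp((5/d)² λ² (∑_{i∈V} u_i)²)] ≤ 26/25. In particular, for a clique pattern graph over ℓ nodes, the quantity λ*_{G,r} = max{λ > 0 : f_{G,r}(λ) ≤ 26/25} satisfies λ*_{G,r} ≤ 2^{-4} d (min{ℓ, r})^{-1/2}. -/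
open MeasureTheory ProbabilityTheory

/-!
(i) Averaging over one sign `u_j = ±1` turns `exp (a (S + u_j)²)` into
`exp a · exp (a S²) · cosh (2 a S) ≤ exp a · exp ((a + 2 a²) S²)`, so induction on `|V|` gives
`E[exp (a (∑_{i ∈ V} u_i)²)] ≤ exp (2 a |V|)` whenever `4 a |V| ≤ 1`; for `a |V| ≤ 2⁻⁸` this is
at most `exp (1/128) ≤ 26/25`.

(ii) A permutation sending the clique onto `{0, …, ℓ - 1}` makes its projection contain the
`min ℓ r` diagonal pairs `(j, j)`. As `E[u_i u_j] = δ_ij` and `exp x ≥ 1 + x`, the expectation is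
then at least `1 + (5/d)² λ² min ℓ r`, forcing `λ ≤ d / (25 √(min ℓ r))`. For `ℓ = 0` every
`λ > 0` is admissible and `sSup` takes its junk value `0`.
-/

section

open Finset Real

def IsRademacher {Ω : Type*} [MeasurableSpace Ω] (X : Ω → ℝ) (μ : Measure Ω) : Prop :=
  μ {ω | X ω = 1} = 1 / 2 ∧ μ {ω | X ω = -1} = 1 / 2

section General

variable {Ω : Type*} [MeasurableSpace Ω] {μ : Measure Ω}

theorem integrable_comp_of_ae_abs_le [IsFiniteMeasure μ] {X : Ω → ℝ} (hX : AEMeasurable X μ)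
    {g : ℝ → ℝ} (hg : Continuous g) {C : ℝ} (hC : ∀ᵐ ω ∂μ, |X ω| ≤ C) :
    Integrable (fun ω => g (X ω)) μ := by
  obtain ⟨M, hM⟩ := (isCompact_Icc (a := -C) (b := C)).exists_bound_of_continuousOn hg.continuousOn
  refine Integrable.of_bound (hg.comp_aestronglyMeasurable hX.aestronglyMeasurable) M ?_
  filter_upwards [hC] with ω hω
  exact hM _ (abs_le.mp hω)

theorem ae_abs_sum_le_card {κ : Type*} {s : Finset κ} {Z : κ → Ω → ℝ}
    (hZ : ∀ k ∈ s, ∀ᵐ ω ∂μ, |Z k ω| ≤ 1) : ∀ᵐ ω ∂μ, |∑ k ∈ s, Z k ω| ≤ #s := by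
  filter_upwards [(Filter.eventually_all_finset s).2 hZ] with ω hω
  calc |∑ k ∈ s, Z k ω| ≤ ∑ k ∈ s, |Z k ω| := abs_sum_le_sum_abs _ _
    _ ≤ ∑ _k ∈ s, 1 := sum_le_sum hω
    _ = #s := by simp

theorem one_add_integral_le_integral_exp [IsProbabilityMeasure μ] {Y : Ω → ℝ}
    (hY : Integrable Y μ) (hexp : Integrable (fun ω => exp (Y ω)) μ) :
    1 + ∫ ω, Y ω ∂μ ≤ ∫ ω, exp (Y ω) ∂μ :=
  calc 1 + ∫ ω, Y ω ∂μ = ∫ ω, Y ω + 1 ∂μ := by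
        rw [integral_add hY (integrable_const 1), integral_const]; simp [add_comm]
    _ ≤ ∫ ω, exp (Y ω) ∂μ := integral_mono (hY.add (integrable_const 1)) hexp
        fun ω => add_one_le_exp (Y ω)

end General

namespace IsRademacher

variable {Ω : Type*} [MeasurableSpace Ω] {μ : Measure Ω} [IsProbabilityMeasure μ] {X : Ω → ℝ}

theorem ae_eq_one_or_neg_one (hX : IsRademacher X μ) (hXm : Measurable X) :
    ∀ᵐ ω ∂μ, X ω = 1 ∨ X ω = -1 := by
  have h₁ : MeasurableSet {ω | X ω = 1} := measurableSet_eq_fun hXm measurable_const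
  have h₂ : MeasurableSet {ω | X ω = -1} := measurableSet_eq_fun hXm measurable_const
  have hdisj : Disjoint {ω | X ω = 1} {ω | X ω = -1} :=
    Set.disjoint_left.2 fun ω (h : X ω = 1) (h' : X ω = -1) => by norm_num [h] at h'
  change ∀ᵐ ω ∂μ, ω ∈ {ω | X ω = 1} ∪ {ω | X ω = -1}
  rw [ae_mem_iff_measure_eq (h₁.union h₂).nullMeasurableSet, measure_union hdisj h₂,
    hX.1, hX.2, ENNReal.add_halves, measure_univ]

theorem ae_abs_le_one (hX : IsRademacher X μ) (hXm : Measurable X) : ∀ᵐ ω ∂μ, |X ω| ≤ 1 := by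
  filter_upwards [hX.ae_eq_one_or_neg_one hXm] with ω h
  rcases h with h | h <;> simp [h]

theorem integrable (hX : IsRademacher X μ) (hXm : Measurable X) : Integrable X μ :=
  Integrable.of_bound hXm.aestronglyMeasurable 1 (hX.ae_abs_le_one hXm)

theorem integral_eq_zero (hX : IsRademacher X μ) (hXm : Measurable X) : ∫ ω, X ω ∂μ = 0 := by
  have h₁ : MeasurableSet {ω | X ω = 1} := measurableSet_eq_fun hXm measurable_const
  have hX' : X =ᵐ[μ] fun ω => 2 * Set.indicator {ω | X ω = 1} 1 ω - 1 := by
    filter_upwards [hX.ae_eq_one_or_neg_one hXm] with ω h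
    rcases h with h | h <;> norm_num [h]
  rw [integral_congr_ae hX', integral_sub (((integrable_const 1).indicator h₁).const_mul 2)
    (integrable_const 1), integral_const_mul, integral_indicator_one h₁, measureReal_def, hX.1]
  norm_num

theorem mul_self_ae_eq_one (hX : IsRademacher X μ) (hXm : Measurable X) :
    (fun ω => X ω * X ω) =ᵐ[μ] 1 := by
  filter_upwards [hX.ae_eq_one_or_neg_one hXm] with ω h
  rcases h with h | h <;> norm_num [h]

end IsRademacher

section Conditioning

variable {Ω : Type*} [MeasurableSpace Ω] {μ : Measure Ω} [IsProbabilityMeasure μ]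

theorem ProbabilityTheory.IndepFun.integral_comp_rademacher {β : Type*} [MeasurableSpace β]
    {Y : Ω → β} {ε : Ω → ℝ} (hind : IndepFun Y ε μ) (hε : IsRademacher ε μ) (hεm : Measurable ε)
    {F : β → ℝ → ℝ} (hF₁ : Measurable (F · 1)) (hF₂ : Measurable (F · (-1)))
    (hi₁ : Integrable (fun ω => F (Y ω) 1) μ) (hi₂ : Integrable (fun ω => F (Y ω) (-1)) μ) :
    ∫ ω, F (Y ω) (ε ω) ∂μ = ∫ ω, (F (Y ω) 1 + F (Y ω) (-1)) / 2 ∂μ := by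
  set G : β → ℝ := fun y => (F y 1 - F y (-1)) / 2
  -- On `{ε = ±1}`, `F (Y, ε)` is the even part plus `ε` times the odd part.
  have hsplit : (fun ω => F (Y ω) (ε ω)) =ᵐ[μ]
      fun ω => (F (Y ω) 1 + F (Y ω) (-1)) / 2 + ε ω * G (Y ω) := by
    filter_upwards [hε.ae_eq_one_or_neg_one hεm] with ω h
    rcases h with h | h <;> rw [h] <;> ring
  have hodd : ∫ ω, ε ω * G (Y ω) ∂μ = 0 := by
    have hG : Measurable G := (hF₁.sub hF₂).div_const 2
    calc ∫ ω, ε ω * G (Y ω) ∂μ = (∫ ω, ε ω ∂μ) * ∫ ω, G (Y ω) ∂μ :=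
          (hind.symm.comp measurable_id hG).integral_fun_mul_eq_mul_integral
            hεm.aestronglyMeasurable ((hi₁.sub hi₂).div_const 2).aestronglyMeasurable
      _ = 0 := by rw [hε.integral_eq_zero hεm, zero_mul]
  have heven : Integrable (fun ω => (F (Y ω) 1 + F (Y ω) (-1)) / 2) μ := (hi₁.add hi₂).div_const 2
  have hodd_int : Integrable (fun ω => ε ω * G (Y ω)) μ :=
    ((hi₁.sub hi₂).div_const 2).bdd_mul hεm.aestronglyMeasurable (hε.ae_abs_le_one hεm)
  rw [integral_congr_ae hsplit, integral_add heven hodd_int, hodd, add_zero]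

end Conditioning

theorem exp_mul_add_sq_avg_le (a s : ℝ) :
    (exp (a * (s + 1) ^ 2) + exp (a * (s + -1) ^ 2)) / 2 ≤ exp a * exp ((a + 2 * a ^ 2) * s ^ 2) :=
  calc (exp (a * (s + 1) ^ 2) + exp (a * (s + -1) ^ 2)) / 2
      = exp a * exp (a * s ^ 2) * cosh (2 * a * s) := by
        rw [cosh_eq, ← exp_add, mul_div_assoc', mul_add, ← exp_add, ← exp_add]
        congr 3 <;> ring
    _ ≤ exp a * exp (a * s ^ 2) * exp ((2 * a * s) ^ 2 / 2) := by
        gcongr; exact cosh_le_exp_half_sq _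
    _ = exp a * exp ((a + 2 * a ^ 2) * s ^ 2) := by rw [mul_assoc, ← exp_add]; ring_nf

namespace Rademacher

variable {Ω ι : Type*} [MeasurableSpace Ω] {μ : Measure Ω} [IsProbabilityMeasure μ]
  {u : ι → Ω → ℝ}

theorem integral_exp_mul_sq_sum_le (hmeas : ∀ i, Measurable (u i)) (hindep : iIndepFun u μ)
    (hu : ∀ i, IsRademacher (u i) μ) (V : Finset ι) {a : ℝ} (ha : 0 ≤ a)
    (haV : 4 * a * #V ≤ 1) :
    ∫ ω, exp (a * (∑ i ∈ V, u i ω) ^ 2) ∂μ ≤ exp (2 * a * #V) := by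
  classical
  induction V using Finset.induction_on generalizing a with
  | empty => simp
  | @insert j V hj ih =>
    rw [card_insert_of_notMem hj, Nat.cast_succ] at haV ⊢
    set S : Ω → ℝ := fun ω => ∑ i ∈ V, u i ω
    have hSm : Measurable S := Finset.measurable_sum V fun i _ => hmeas i
    have hSind : IndepFun S (u j) μ := by
      have h := hindep.indepFun_finsetSum_of_notMem hmeas hj
      rwa [Finset.sum_fn] at h
    have hSbdd : ∀ᵐ ω ∂μ, |S ω| ≤ #V :=
      ae_abs_sum_le_card fun i _ => (hu i).ae_abs_le_one (hmeas i)
    have hint : ∀ {g : ℝ → ℝ}, Continuous g → Integrable (fun ω => g (S ω)) μ :=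
      fun hg => integrable_comp_of_ae_abs_le hSm.aemeasurable hg hSbdd
    set a' := a + 2 * a ^ 2
    have hkey : ∫ ω, exp (a * (S ω + u j ω) ^ 2) ∂μ
        = ∫ ω, (exp (a * (S ω + 1) ^ 2) + exp (a * (S ω + -1) ^ 2)) / 2 ∂μ :=
      hSind.integral_comp_rademacher (hu j) (hmeas j) (F := fun s e => exp (a * (s + e) ^ 2))
        (by fun_prop) (by fun_prop) (hint (g := fun s => exp (a * (s + 1) ^ 2)) (by fun_prop))
        (hint (g := fun s => exp (a * (s + -1) ^ 2)) (by fun_prop))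
    have hV : (0 : ℝ) ≤ #V := Nat.cast_nonneg _
    calc ∫ ω, exp (a * (∑ i ∈ insert j V, u i ω) ^ 2) ∂μ
        = ∫ ω, exp (a * (S ω + u j ω) ^ 2) ∂μ := by simp only [sum_insert hj, add_comm, S]
      _ = ∫ ω, (exp (a * (S ω + 1) ^ 2) + exp (a * (S ω + -1) ^ 2)) / 2 ∂μ := hkey
      _ ≤ ∫ ω, exp a * exp (a' * S ω ^ 2) ∂μ :=
          integral_mono (hint (g := fun s => (exp (a * (s + 1) ^ 2) + exp (a * (s + -1) ^ 2)) / 2)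
            (by fun_prop)) (hint (g := fun s => exp a * exp (a' * s ^ 2)) (by fun_prop))
            fun ω => exp_mul_add_sq_avg_le a (S ω)
      _ = exp a * ∫ ω, exp (a' * S ω ^ 2) ∂μ := integral_const_mul _ _
      _ ≤ exp a * exp (2 * a' * #V) := by
          gcongr
          exact ih (by positivity) (by nlinarith [mul_nonneg ha hV])
      _ ≤ exp (2 * a * (#V + 1)) := by
          rw [← exp_add]
          gcongr
          nlinarith [mul_nonneg ha hV]

theorem integral_mul_eq_ite [DecidableEq ι] (hmeas : ∀ i, Measurable (u i))
    (hindep : iIndepFun u μ) (hu : ∀ i, IsRademacher (u i) μ) (i j : ι) :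
    ∫ ω, u i ω * u j ω ∂μ = if i = j then 1 else 0 := by
  split_ifs with h
  · subst h
    rw [integral_congr_ae ((hu i).mul_self_ae_eq_one (hmeas i))]
    simp
  · rw [(hindep.indepFun h).integral_fun_mul_eq_mul_integral (hmeas i).aestronglyMeasurable
      (hmeas j).aestronglyMeasurable, (hu i).integral_eq_zero (hmeas i), zero_mul]

theorem integrable_mul (hmeas : ∀ i, Measurable (u i)) (hu : ∀ i, IsRademacher (u i) μ)
    (i j : ι) : Integrable (fun ω => u i ω * u j ω) μ :=
  ((hu j).integrable (hmeas j)).bdd_mul (hmeas i).aestronglyMeasurable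
    ((hu i).ae_abs_le_one (hmeas i))

variable [DecidableEq ι] {α : Type*} (f : α → ι) (S : Finset α)

theorem card_image_le_integral_sum_mul (hmeas : ∀ i, Measurable (u i))
    (hindep : iIndepFun u μ) (hu : ∀ i, IsRademacher (u i) μ) :
    (#(S.image f) : ℝ) ≤
      ∫ ω, ∑ q ∈ (S ×ˢ S).image (fun p => (f p.1, f p.2)), u q.1 ω * u q.2 ω ∂μ := by
  set Q := (S ×ˢ S).image (fun p => (f p.1, f p.2))
  rw [integral_finsetSum Q fun q _ => integrable_mul hmeas hu q.1 q.2]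
  simp_rw [integral_mul_eq_ite hmeas hindep hu, sum_boole]
  -- each value `f s` contributes the diagonal pair `(f s, f s)` of the projected clique
  refine Nat.cast_le.2 (card_le_card_of_injOn (fun i => (i, i)) ?_ ?_)
  · intro i hi
    obtain ⟨s, hs, rfl⟩ := mem_image.1 hi
    exact mem_filter.2 ⟨mem_image.2 ⟨(s, s), mem_product.2 ⟨hs, hs⟩, rfl⟩, rfl⟩
  · intro i _ i' _ h
    exact congrArg Prod.fst h

theorem one_add_mul_card_image_le_integral_exp (hmeas : ∀ i, Measurable (u i))
    (hindep : iIndepFun u μ) (hu : ∀ i, IsRademacher (u i) μ) {c : ℝ} (hc : 0 ≤ c) :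
    1 + c * #(S.image f) ≤
      ∫ ω, exp (c * ∑ q ∈ (S ×ˢ S).image (fun p => (f p.1, f p.2)), u q.1 ω * u q.2 ω) ∂μ := by
  set Q := (S ×ˢ S).image (fun p => (f p.1, f p.2))
  have hXm : Measurable fun ω => ∑ q ∈ Q, u q.1 ω * u q.2 ω :=
    Finset.measurable_sum Q fun q _ => (hmeas q.1).mul (hmeas q.2)
  have hXint : Integrable (fun ω => ∑ q ∈ Q, u q.1 ω * u q.2 ω) μ :=
    integrable_finsetSum Q fun q _ => integrable_mul hmeas hu q.1 q.2
  have hXbdd : ∀ᵐ ω ∂μ, |∑ q ∈ Q, u q.1 ω * u q.2 ω| ≤ #Q := by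
    refine ae_abs_sum_le_card fun q _ => ?_
    filter_upwards [(hu q.1).ae_abs_le_one (hmeas q.1), (hu q.2).ae_abs_le_one (hmeas q.2)]
      with ω h₁ h₂
    rw [abs_mul]
    exact mul_le_one₀ h₁ (abs_nonneg _) h₂
  calc 1 + c * #(S.image f) ≤ 1 + ∫ ω, c * ∑ q ∈ Q, u q.1 ω * u q.2 ω ∂μ := by
        rw [integral_const_mul]
        gcongr
        exact card_image_le_integral_sum_mul f S hmeas hindep hu
    _ ≤ _ := one_add_integral_le_integral_exp (hXint.const_mul c)
        (integrable_comp_of_ae_abs_le hXm.aemeasurable (g := fun x => exp (c * x)) (by fun_prop)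
          hXbdd)

end Rademacher

theorem Fin.exists_perm_min_le_card_image_mod {d r : ℕ} (hr : 0 < r) (S : Finset (Fin d)) :
    ∃ σ : Equiv.Perm (Fin d),
      min #S r ≤ #(S.image fun x => (⟨(σ x).val % r, Nat.mod_lt _ hr⟩ : Fin r)) := by
  classical
  set T : Finset (Fin d) := {x | x.val < #S}
  have hT : #S = #T := by
    rw [Fin.card_filter_val_lt, min_eq_right (by simpa using card_le_univ S)]
  -- a permutation sending `S` onto the initial segment `{0, …, #S - 1}`
  set σ := (equivOfCardEq hT).extendSubtype
  refine ⟨σ, ?_⟩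
  calc min #S r = #({j | j.val < #S} : Finset (Fin r)) := by
        rw [Fin.card_filter_val_lt, min_comm]
    _ ≤ _ := card_le_card fun j hj => ?_
  have hjS : j.val < #S := (mem_filter.1 hj).2
  have htT : (⟨j.val, hjS.trans_le (by simpa using card_le_univ S)⟩ : Fin d) ∈ T := by
    simpa [T] using hjS
  refine mem_image.2 ⟨_, ((equivOfCardEq hT).symm ⟨_, htT⟩).2, Fin.ext ?_⟩
  rw [Equiv.extendSubtype_apply_of_mem _ _ (Subtype.prop _), Subtype.coe_eta,
    Equiv.apply_symm_apply]
  exact Nat.mod_eq_of_lt j.isLt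

theorem le_div_sqrt_of_one_add_mul_le {d v lam : ℝ} (hd : 0 < d) (hv : 0 < v) (hlam : 0 ≤ lam)
    (h : 1 + (5 / d) ^ 2 * lam ^ 2 * v ≤ 26 / 25) : lam ≤ 1 / 2 ^ 4 * d / √v := by
  have ht : 0 ≤ lam * √v := by positivity
  have hsq : 625 * (lam * √v) ^ 2 ≤ d ^ 2 := by
    rw [mul_pow, sq_sqrt hv.le]
    rw [div_pow, ← le_sub_iff_add_le', div_mul_eq_mul_div, div_mul_eq_mul_div,
      div_le_iff₀ (by positivity)] at h
    linarith
  rw [le_div_iff₀ (sqrt_pos.2 hv)]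
  nlinarith

end

theorem clique_lambda_star_bound_general {Ω' : Type*} [MeasurableSpace Ω'] (μ : Measure Ω')
    [IsProbabilityMeasure μ] (d r ℓ : ℕ) (hr : 0 < r)
    (u : Fin r → Ω' → ℝ)
    (hmeas : ∀ i, Measurable (u i))
    (hindep : iIndepFun u μ)
    (hu : ∀ i, μ {ω | u i ω = 1} = 1 / 2 ∧ μ {ω | u i ω = -1} = 1 / 2)
    (S : Finset (Fin d)) (hS : S.card = ℓ) :
    (∀ (V : Finset (Fin r)) (lam : ℝ), 0 < lam →
        (5 / (d : ℝ)) ^ 2 * lam ^ 2 ≤ (1 / 2 ^ 8) / (V.card : ℝ) →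
        ∫ ω, Real.exp ((5 / (d : ℝ)) ^ 2 * lam ^ 2 * (∑ i ∈ V, u i ω) ^ 2) ∂μ ≤ 26 / 25)
    ∧ sSup {lam : ℝ | 0 < lam ∧
          (⨆ π : Equiv.Perm (Fin d),
            ∫ ω, Real.exp ((5 / (d : ℝ)) ^ 2 * lam ^ 2 *
              ∑ q ∈ Finset.image
                  (fun pr : Fin d × Fin d =>
                    ((⟨(π pr.1).val % r, Nat.mod_lt _ hr⟩ : Fin r),
                     (⟨(π pr.2).val % r, Nat.mod_lt _ hr⟩ : Fin r)))
                  (S ×ˢ S),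
                u q.1 ω * u q.2 ω) ∂μ) ≤ 26 / 25}
        ≤ (1 / 2 ^ 4) * (d : ℝ) / Real.sqrt (min ℓ r : ℕ) := by
  constructor
  · intro V lam _ hbound
    set a := (5 / (d : ℝ)) ^ 2 * lam ^ 2
    have haV : a * V.card ≤ 1 / 2 ^ 8 := by
      rcases (Nat.cast_nonneg V.card : (0 : ℝ) ≤ V.card).eq_or_lt with hV | hV
      · rw [← hV]; norm_num
      · exact (le_div_iff₀ hV).1 hbound
    calc _ ≤ Real.exp (2 * a * V.card) :=
          Rademacher.integral_exp_mul_sq_sum_le hmeas hindep hu V (by positivity) (by linarith)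
      _ ≤ Real.exp (1 / 128) := Real.exp_le_exp.2 (by linarith)
      _ ≤ 1 / (1 - 1 / 128) := Real.exp_bound_div_one_sub_of_interval (by norm_num) (by norm_num)
      _ ≤ 26 / 25 := by norm_num
  · rcases Nat.eq_zero_or_pos ℓ with rfl | hℓ
    · obtain rfl := Finset.card_eq_zero.1 hS
      rw [Real.sSup_of_not_bddAbove]
      · simp
      · norm_num
        exact not_bddAbove_Ioi 0
    · refine Real.sSup_le (fun lam ⟨hlam, hsup⟩ => ?_) (by positivity)
      obtain ⟨σ, hσ⟩ := Fin.exists_perm_min_le_card_image_mod hr S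
      have hσ' := (Rademacher.one_add_mul_card_image_le_integral_exp
        (fun x => (⟨(σ x).val % r, Nat.mod_lt _ hr⟩ : Fin r)) S hmeas hindep hu
        (c := (5 / (d : ℝ)) ^ 2 * lam ^ 2) (by positivity)).trans
        ((le_ciSup (Finite.bddAbove_range _) σ).trans hsup)
      have hd : 0 < d := hℓ.trans_le (hS ▸ by simpa using S.card_le_univ)
      refine le_div_sqrt_of_one_add_mul_le (by positivity) (by positivity) hlam.le
        (le_trans ?_ hσ')
      gcongr
      exact_mod_cast hS ▸ hσ

/-- Let `u_1, …, u_r` be independent Rademacher variables. (i) For any `V ⊆ [r]` and `λ > 0`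
with `(5/d)²λ² ≤ 2^{-8}/|V|`, we have `E[exp((5/d)²λ²(∑_{i∈V} u_i)²)] ≤ 26/25`.
(ii) In particular, for a clique pattern graph over a subset `S` of `ℓ` nodes, the quantity
`λ*_{G,r} = sup{λ > 0 : f_{G,r}(λ) ≤ 26/25}` (with
`f_{G,r}(λ) = max_π E[exp((5/d)²λ² ∑_{(i,j)∈P^{(r)}(G_π)} u_i u_j)]`) satisfies
`λ*_{G,r} ≤ 2^{-4} d (min{ℓ,r})^{-1/2}`. -/
theorem clique_lambda_star_bound {Ω' : Type*} [MeasurableSpace Ω'] (μ : Measure Ω')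
    [IsProbabilityMeasure μ] (d r ℓ : ℕ) (hr : 0 < r) (hrd : r ≤ d)
    (u : Fin r → Ω' → ℝ)
    (hmeas : ∀ i, Measurable (u i))
    (hindep : iIndepFun u μ)
    (hu : ∀ i, μ {ω | u i ω = 1} = 1 / 2 ∧ μ {ω | u i ω = -1} = 1 / 2)
    (S : Finset (Fin d)) (hS : S.card = ℓ) :
    (∀ (V : Finset (Fin r)) (lam : ℝ), 0 < lam →
        (5 / (d : ℝ)) ^ 2 * lam ^ 2 ≤ (1 / 2 ^ 8) / (V.card : ℝ) →
        ∫ ω, Real.exp ((5 / (d : ℝ)) ^ 2 * lam ^ 2 * (∑ i ∈ V, u i ω) ^ 2) ∂μ ≤ 26 / 25)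
    ∧ sSup {lam : ℝ | 0 < lam ∧
          (⨆ π : Equiv.Perm (Fin d),
            ∫ ω, Real.exp ((5 / (d : ℝ)) ^ 2 * lam ^ 2 *
              ∑ q ∈ Finset.image
                  (fun pr : Fin d × Fin d =>
                    ((⟨(π pr.1).val % r, Nat.mod_lt _ hr⟩ : Fin r),
                     (⟨(π pr.2).val % r, Nat.mod_lt _ hr⟩ : Fin r)))
                  (S ×ˢ S),
                u q.1 ω * u q.2 ω) ∂μ) ≤ 26 / 25}
        ≤ (1 / 2 ^ 4) * (d : ℝ) / Real.sqrt (min ℓ r : ℕ) :=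
  clique_lambda_star_bound_general μ d r ℓ hr u hmeas hindep hu S hS
end

section
/- Let μ be a probability distribution on ℝ^n and let W, W' be independent random vectors with distribution μ. Then the chi-squared divergence between the Gaussian location mixture N(0, I_n) ∗ μ and the standard Gaussian N(0, I_n) satisfies χ²(N(0,I_n) ∗ μ ‖ N(0,I_n)) ≤ E[exp(⟨W, W'⟩)] − 1. -/
/-!
The law of `Z + w` has density `x ↦ exp (⟪w, x⟫ - ‖w‖² / 2)` with respect to `N(0, Iₙ)`, so the
mixture `N(0, Iₙ) ∗ μ` has density `f x = E[exp (⟪W, x⟫ - ‖W‖² / 2)]`. Writing `f²` as an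
expectation over an independent pair `(W, W')` and integrating in `x` first (Tonelli), the
Gaussian moment generating function turns
`∫ exp (⟪W + W', x⟫ - (‖W‖² + ‖W'‖²) / 2) dN(0, Iₙ)(x)` into `exp ⟪W, W'⟫`; in fact equality holds.
-/

open MeasureTheory ProbabilityTheory Real
open scoped ENNReal NNReal

namespace MeasureTheory

theorem lintegral_fin_nat_prod_eq_prod {n : ℕ} {X : Fin n → Type*} [∀ i, MeasurableSpace (X i)]
    (ν : ∀ i, Measure (X i)) [∀ i, SigmaFinite (ν i)]
    (f : ∀ i, X i → ℝ≥0∞) (hf : ∀ i, Measurable (f i)) :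
    ∫⁻ x, ∏ i, f i (x i) ∂Measure.pi ν = ∏ i, ∫⁻ t, f i t ∂ν i := by
  induction n with
  | zero => simp
  | succ n ih =>
    rw [← (measurePreserving_piFinSuccAbove ν 0).symm.lintegral_comp_emb
      (MeasurableEquiv.piFinSuccAbove X 0).symm.measurableEmbedding]
    simp_rw [Fin.prod_univ_succAbove _ 0, MeasurableEquiv.piFinSuccAbove_symm_apply,
      Fin.insertNthEquiv, Equiv.coe_fn_mk, Fin.insertNth_apply_same,
      Fin.insertNth_apply_succAbove]
    rw [← ih _ _ fun j => hf _]
    exact lintegral_prod_mul (g := fun y : ∀ j, X (Fin.succAbove 0 j) => ∏ j, f _ (y j))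
      (hf 0).aemeasurable
      (Finset.measurable_prod _ fun j _ => (hf _).comp (measurable_pi_apply j)).aemeasurable

theorem Measure.pi_withDensity {n : ℕ} {X : Fin n → Type*} [∀ i, MeasurableSpace (X i)]
    (ν : ∀ i, Measure (X i)) [∀ i, SigmaFinite (ν i)]
    (f : ∀ i, X i → ℝ≥0∞) (hf : ∀ i, Measurable (f i))
    [∀ i, SigmaFinite ((ν i).withDensity (f i))] :
    Measure.pi (fun i => (ν i).withDensity (f i))
      = (Measure.pi ν).withDensity fun x => ∏ i, f i (x i) := by
  refine Measure.pi_eq (μ := fun i => (ν i).withDensity (f i)) fun s hs => ?_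
  rw [withDensity_apply _ (.univ_pi hs), Measure.restrict_pi_pi,
    lintegral_fin_nat_prod_eq_prod _ _ hf]
  exact Finset.prod_congr rfl fun i _ => (withDensity_apply _ (hs i)).symm

theorem Measure.conv_eq_withDensity_lintegral {G : Type*} [MeasurableSpace G] [AddMonoid G]
    [MeasurableAdd₂ G] {Q μ : Measure G} [SFinite Q] [SFinite μ] {g : G → G → ℝ≥0∞}
    (hg : Measurable (Function.uncurry g)) (hQ : ∀ w, Q.map (· + w) = Q.withDensity (g w)) :
    Q ∗ μ = Q.withDensity fun x => ∫⁻ w, g w x ∂μ := by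
  ext s hs
  rw [Measure.conv, Measure.map_apply measurable_add hs,
    Measure.prod_apply_symm (measurable_add hs), withDensity_apply _ hs,
    lintegral_lintegral_swap (f := fun x w => g w x) (hg.comp measurable_swap).aemeasurable]
  refine lintegral_congr fun w => ?_
  rw [← withDensity_apply _ hs, ← hQ, Measure.map_apply (measurable_add_const w) hs]
  rfl

theorem lintegral_sq_lintegral {α β : Type*} [MeasurableSpace α] [MeasurableSpace β]
    {Q : Measure α} {μ : Measure β} [SFinite Q] [SFinite μ] {g : β → α → ℝ≥0∞}
    (hg : Measurable (Function.uncurry g)) :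
    ∫⁻ x, (∫⁻ w, g w x ∂μ) ^ 2 ∂Q = ∫⁻ p, ∫⁻ x, g p.1 x * g p.2 x ∂Q ∂μ.prod μ := by
  have hg_left (x : α) : Measurable fun w => g w x :=
    hg.comp (measurable_id.prodMk measurable_const)
  simp_rw [sq, ← lintegral_prod_mul (hg_left _).aemeasurable (hg_left _).aemeasurable]
  exact lintegral_lintegral_swap ((hg.comp (measurable_snd.fst.prodMk measurable_fst)).mul
    (hg.comp (measurable_snd.snd.prodMk measurable_fst))).aemeasurable

theorem integral_toReal_rnDeriv_sq {α : Type*} [MeasurableSpace α] (P Q : Measure α)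
    [SigmaFinite P] :
    ∫ x, (P.rnDeriv Q x).toReal ^ 2 ∂Q = (∫⁻ x, P.rnDeriv Q x ^ 2 ∂Q).toReal := by
  simp_rw [← ENNReal.toReal_pow]
  refine integral_toReal (by fun_prop) ?_
  filter_upwards [Measure.rnDeriv_lt_top P Q] with x hx
  exact ENNReal.pow_lt_top hx

end MeasureTheory

namespace ProbabilityTheory

theorem gaussianReal_withDensity_exp (m : ℝ) :
    (gaussianReal 0 1).withDensity (fun t => ENNReal.ofReal (exp (m * t - m ^ 2 / 2)))
      = gaussianReal m 1 := by
  rw [gaussianReal_of_var_ne_zero 0 one_ne_zero, gaussianReal_of_var_ne_zero m one_ne_zero,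
    ← withDensity_mul _ (measurable_gaussianPDF 0 1) (by fun_prop)]
  congr 1
  ext t
  simp only [Pi.mul_apply, gaussianPDF_def, ← ENNReal.ofReal_mul (gaussianPDFReal_nonneg 0 1 t)]
  congr 1
  simp only [gaussianPDFReal, NNReal.coe_one, mul_one, sub_zero, mul_assoc, ← Real.exp_add]
  ring_nf

theorem lintegral_exp_mul_gaussianReal (m : ℝ) (v : ℝ≥0) (a : ℝ) :
    ∫⁻ t, ENNReal.ofReal (exp (a * t)) ∂gaussianReal m v
      = ENNReal.ofReal (exp (m * a + v * a ^ 2 / 2)) := by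
  rw [← ofReal_integral_eq_lintegral_ofReal (integrable_exp_mul_gaussianReal a)
    (ae_of_all _ fun t => (exp_pos _).le), ← congrFun mgf_id_gaussianReal a]
  rfl

theorem lintegral_exp_mul_exp_gaussianReal (a b : ℝ) :
    ∫⁻ t, ENNReal.ofReal (exp (a * t - a ^ 2 / 2)) * ENNReal.ofReal (exp (b * t - b ^ 2 / 2))
        ∂gaussianReal 0 1 = ENNReal.ofReal (exp (a * b)) := by
  have hsplit (t : ℝ) :
      ENNReal.ofReal (exp (a * t - a ^ 2 / 2)) * ENNReal.ofReal (exp (b * t - b ^ 2 / 2))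
        = ENNReal.ofReal (exp ((a + b) * t)) * ENNReal.ofReal (exp (-(a ^ 2 + b ^ 2) / 2)) := by
    rw [← ENNReal.ofReal_mul (exp_nonneg _), ← ENNReal.ofReal_mul (exp_nonneg _), ← exp_add,
      ← exp_add]
    ring_nf
  simp_rw [hsplit]
  rw [lintegral_mul_const _ (by fun_prop), lintegral_exp_mul_gaussianReal,
    ← ENNReal.ofReal_mul (exp_nonneg _), ← exp_add]
  congr 2
  push_cast
  ring

noncomputable def gaussianShiftDensity {n : ℕ} (w x : Fin n → ℝ) : ℝ≥0∞ :=
  ∏ i, ENNReal.ofReal (exp (w i * x i - w i ^ 2 / 2))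

theorem measurable_gaussianShiftDensity {n : ℕ} :
    Measurable (Function.uncurry (gaussianShiftDensity (n := n))) := by
  unfold gaussianShiftDensity
  fun_prop

theorem map_add_const_pi_gaussianReal {n : ℕ} (w : Fin n → ℝ) :
    (Measure.pi fun _ => gaussianReal 0 1).map (· + w)
      = (Measure.pi fun _ => gaussianReal 0 1).withDensity (gaussianShiftDensity w) := by
  rw [show (· + w) = fun x i => x i + w i from rfl,
    Measure.pi_map_pi fun i => (measurable_add_const (w i)).aemeasurable]
  simp_rw [gaussianReal_map_add_const, zero_add]
  refine (congrArg Measure.pi (funext fun i => (gaussianReal_withDensity_exp (w i)).symm)).trans ?_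
  exact Measure.pi_withDensity _ _ fun i => by fun_prop

theorem lintegral_gaussianShiftDensity_mul {n : ℕ} (w w' : Fin n → ℝ) :
    ∫⁻ x, gaussianShiftDensity w x * gaussianShiftDensity w' x
        ∂Measure.pi (fun _ => gaussianReal 0 1) = ENNReal.ofReal (exp (∑ i, w i * w' i)) := by
  simp_rw [gaussianShiftDensity, ← Finset.prod_mul_distrib]
  rw [lintegral_fin_nat_prod_eq_prod _ (fun i t => ENNReal.ofReal (exp (w i * t - w i ^ 2 / 2))
    * ENNReal.ofReal (exp (w' i * t - w' i ^ 2 / 2))) fun i => by fun_prop]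
  simp_rw [lintegral_exp_mul_exp_gaussianReal, exp_sum]
  rw [ENNReal.ofReal_prod_of_nonneg fun i _ => (exp_pos _).le]

end ProbabilityTheory

/-- Let `μ` be a probability distribution on `ℝⁿ` and `W, W'` independent with law `μ`.
Then `χ²(N(0,Iₙ) ∗ μ ‖ N(0,Iₙ)) ≤ E[exp(⟨W,W'⟩)] − 1`, where `N(0,Iₙ) ∗ μ` is the law of
`Z + W` with `Z ∼ N(0,Iₙ)` independent of `W`, and
`χ²(P‖Q) = ∫ (dP/dQ)² dQ − 1`. -/
theorem chiSq_gaussian_mixture_le {n : ℕ} (μ : Measure (Fin n → ℝ))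
    [IsProbabilityMeasure μ] :
    (∫ x, (((Measure.map (fun pr : (Fin n → ℝ) × (Fin n → ℝ) => pr.1 + pr.2)
            ((Measure.pi fun _ : Fin n => gaussianReal 0 1).prod μ)).rnDeriv
          (Measure.pi fun _ : Fin n => gaussianReal 0 1) x).toReal) ^ 2
        ∂(Measure.pi fun _ : Fin n => gaussianReal 0 1)) - 1
      ≤ (∫ pr, Real.exp (∑ i, pr.1 i * pr.2 i) ∂(μ.prod μ)) - 1 := by
  set Q : Measure (Fin n → ℝ) := Measure.pi fun _ => gaussianReal 0 1
  have hmix : Q ∗ μ = Q.withDensity fun x => ∫⁻ w, gaussianShiftDensity w x ∂μ :=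
    Measure.conv_eq_withDensity_lintegral measurable_gaussianShiftDensity
      map_add_const_pi_gaussianReal
  have hrnDeriv : (Q ∗ μ).rnDeriv Q =ᵐ[Q] fun x => ∫⁻ w, gaussianShiftDensity w x ∂μ := by
    rw [hmix]
    exact Measure.rnDeriv_withDensity Q measurable_gaussianShiftDensity.lintegral_prod_left'
  refine sub_le_sub_right (le_of_eq ?_) 1
  change ∫ x, ((Q ∗ μ).rnDeriv Q x).toReal ^ 2 ∂Q = _
  rw [integral_toReal_rnDeriv_sq, lintegral_congr_ae (hrnDeriv.fun_pow_const 2),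
    lintegral_sq_lintegral measurable_gaussianShiftDensity,
    integral_eq_lintegral_of_nonneg_ae (ae_of_all _ fun _ => (exp_pos _).le) (by fun_prop)]
  simp only [Q, lintegral_gaussianShiftDensity_mul]
end

section
/- For s ≥ 0, define the polynomial q_s(x) = (1/B(s+1, s+1)) ∫₀^x t^s (1−t)^s dt, where B is the Beta function. Let q be any polynomial with q(x) ∈ [0,1] for x ∈ [0,1], q(x) ≥ 1 − 0.1 for x ∈ [c₁, 1], and q(x) ≤ 0.1 for x ∈ [0, c₂]. Then the composite f = q_s ∘ q satisfies f(x) ∈ [0,1] for all x ∈ [0,1], and |f(x) − H_{c₁,c₂}(x)| ≤ 2^{−s} for all x ∈ [0, c₂] ∪ [c₁, 1]. -/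
/-- The piecewise linear approximation `H_{c₁,c₂}` of the step function. -/
noncomputable def Hfun (c₁ c₂ x : ℝ) : ℝ :=
  if c₁ < x then 1 else if x < c₂ then 0 else (x - c₂) / (c₁ - c₂)

/-- The polynomial `q_s(x) = (1/B(s+1,s+1)) ∫₀ˣ tˢ(1−t)ˢ dt`, where
`B(s+1,s+1) = ∫₀¹ tˢ(1−t)ˢ dt` is the Beta function. -/
noncomputable def qs (s : ℕ) (x : ℝ) : ℝ :=
  (∫ t in (0 : ℝ)..x, t ^ s * (1 - t) ^ s) / ∫ t in (0 : ℝ)..1, t ^ s * (1 - t) ^ s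

namespace QsAux

open intervalIntegral MeasureTheory

lemma g_intble (s : ℕ) (a b : ℝ) :
    IntervalIntegrable (fun t : ℝ => t ^ s * (1 - t) ^ s) volume a b :=
  (Continuous.intervalIntegrable (by continuity) a b)

lemma D_pos (s : ℕ) : 0 < ∫ t in (0:ℝ)..1, t ^ s * (1 - t) ^ s := by
  apply intervalIntegral.intervalIntegral_pos_of_pos_on (g_intble s 0 1)
  · intro t ht
    exact mul_pos (pow_pos ht.1 s) (pow_pos (by linarith [ht.2]) s)
  · norm_num

lemma seg_nonneg (s : ℕ) {a b : ℝ} (h0 : 0 ≤ a) (hab : a ≤ b) (hb : b ≤ 1) :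
    0 ≤ ∫ t in a..b, t ^ s * (1 - t) ^ s := by
  apply intervalIntegral.integral_nonneg hab
  intro t ht
  exact mul_nonneg (pow_nonneg (le_trans h0 ht.1) s)
    (pow_nonneg (by linarith [ht.2, hb] : (0:ℝ) ≤ 1 - t) s)

lemma I_split (s : ℕ) (a b : ℝ) :
    (∫ t in (0:ℝ)..b, t ^ s * (1 - t) ^ s)
      = (∫ t in (0:ℝ)..a, t ^ s * (1 - t) ^ s) + ∫ t in a..b, t ^ s * (1 - t) ^ s :=
  (intervalIntegral.integral_add_adjacent_intervals (g_intble s 0 a) (g_intble s a b)).symm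

lemma I_mono (s : ℕ) {a b : ℝ} (h0 : 0 ≤ a) (hab : a ≤ b) (hb : b ≤ 1) :
    (∫ t in (0:ℝ)..a, t ^ s * (1 - t) ^ s) ≤ ∫ t in (0:ℝ)..b, t ^ s * (1 - t) ^ s := by
  rw [I_split s a b]
  linarith [seg_nonneg s h0 hab hb]

lemma seg_le (s : ℕ) {a b C : ℝ} (hab : a ≤ b) (hC : ∀ t ∈ Set.Icc a b, t ^ s * (1 - t) ^ s ≤ C) :
    (∫ t in a..b, t ^ s * (1 - t) ^ s) ≤ (b - a) * C := by
  have := intervalIntegral.integral_mono_on hab (g_intble s a b)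
    (_root_.intervalIntegrable_const (c := C)) hC
  simpa using this

lemma seg_ge (s : ℕ) {a b C : ℝ} (hab : a ≤ b) (hC : ∀ t ∈ Set.Icc a b, C ≤ t ^ s * (1 - t) ^ s) :
    (b - a) * C ≤ ∫ t in a..b, t ^ s * (1 - t) ^ s := by
  have := intervalIntegral.integral_mono_on hab
    (_root_.intervalIntegrable_const (c := C)) (g_intble s a b) hC
  simpa using this

lemma pt_small (s : ℕ) {t : ℝ} (h : (t - 0.1) * (t - 0.9) ≥ 0) (h0 : 0 ≤ t) (h1 : t ≤ 1) :
    t ^ s * (1 - t) ^ s ≤ (0.09 : ℝ) ^ s := by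
  rw [← mul_pow]
  exact pow_le_pow_left₀ (mul_nonneg h0 (by linarith)) (by nlinarith) s

lemma pt_big (s : ℕ) {t : ℝ} (h4 : 0.4 ≤ t) (h6 : t ≤ 0.6) :
    (0.24 : ℝ) ^ s ≤ t ^ s * (1 - t) ^ s := by
  rw [← mul_pow]
  exact pow_le_pow_left₀ (by norm_num) (by nlinarith) s

lemma D_ge (s : ℕ) : (0.2 : ℝ) * 0.24 ^ s ≤ ∫ t in (0:ℝ)..1, t ^ s * (1 - t) ^ s := by
  have h1 : (∫ t in (0:ℝ)..1, t ^ s * (1 - t) ^ s)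
      = (∫ t in (0:ℝ)..0.4, t ^ s * (1 - t) ^ s)
        + ((∫ t in (0.4:ℝ)..0.6, t ^ s * (1 - t) ^ s)
          + ∫ t in (0.6:ℝ)..1, t ^ s * (1 - t) ^ s) := by
    rw [intervalIntegral.integral_add_adjacent_intervals (g_intble s 0.4 0.6) (g_intble s 0.6 1),
      intervalIntegral.integral_add_adjacent_intervals (g_intble s 0 0.4) (g_intble s 0.4 1)]
  have h2 := seg_ge s (by norm_num : (0.4:ℝ) ≤ 0.6) (fun t ht => pt_big s ht.1 ht.2)
  have h3 := seg_nonneg s (by norm_num : (0:ℝ) ≤ 0) (by norm_num : (0:ℝ) ≤ 0.4) (by norm_num)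
  have h4 := seg_nonneg s (by norm_num : (0:ℝ) ≤ 0.6) (by norm_num : (0.6:ℝ) ≤ 1) (by norm_num)
  rw [h1]
  nlinarith [h2]

lemma tail_le (s : ℕ) : (∫ t in (0.9:ℝ)..1, t ^ s * (1 - t) ^ s) ≤ 0.1 * 0.09 ^ s := by
  have := seg_le s (by norm_num : (0.9:ℝ) ≤ 1)
    (fun t ht => pt_small s (by nlinarith [ht.1, ht.2]) (by linarith [ht.1]) ht.2)
  linarith [this]

lemma head_le (s : ℕ) {y : ℝ} (h0 : 0 ≤ y) (hy : y ≤ 0.1) :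
    (∫ t in (0:ℝ)..y, t ^ s * (1 - t) ^ s) ≤ 0.1 * 0.09 ^ s := by
  have h1 := I_mono s h0 hy (by norm_num)
  have h2 := seg_le s (by norm_num : (0:ℝ) ≤ 0.1)
    (fun t ht => pt_small s (by nlinarith [ht.1, ht.2]) ht.1 (by linarith [ht.2]))
  linarith

lemma key_ratio (s : ℕ) : (0.1 : ℝ) * 0.09 ^ s / (0.2 * 0.24 ^ s) ≤ 1 / 2 ^ s := by
  rw [div_le_div_iff₀ (by positivity) (by positivity)]
  have : (0.1 : ℝ) * 0.09 ^ s * 2 ^ s = 0.1 * 0.18 ^ s := by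
    rw [mul_assoc, ← mul_pow]; norm_num
  rw [this]
  have h : (0.18 : ℝ) ^ s ≤ 0.24 ^ s := pow_le_pow_left₀ (by norm_num) (by norm_num) s
  nlinarith [pow_nonneg (by norm_num : (0:ℝ) ≤ 0.18) s]

lemma qs_mem (s : ℕ) {y : ℝ} (h0 : 0 ≤ y) (h1 : y ≤ 1) : qs s y ∈ Set.Icc (0:ℝ) 1 := by
  have hD := D_pos s
  have hnn : 0 ≤ ∫ t in (0:ℝ)..y, t ^ s * (1 - t) ^ s := by
    have := I_mono s (le_refl 0) h0 h1
    simpa using this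
  constructor
  · exact div_nonneg hnn hD.le
  · rw [qs, div_le_one hD]
    exact I_mono s h0 h1 le_rfl

lemma qs_lo (s : ℕ) {y : ℝ} (h0 : 0 ≤ y) (hy : y ≤ 0.1) : qs s y ≤ 1 / 2 ^ s := by
  have hD := D_pos s
  calc qs s y ≤ (0.1 * 0.09 ^ s) / (0.2 * 0.24 ^ s) := by
        apply div_le_div₀ (by positivity) (head_le s h0 hy) (by positivity) (D_ge s)
    _ ≤ 1 / 2 ^ s := key_ratio s

lemma qs_hi (s : ℕ) {y : ℝ} (h0 : 0.9 ≤ y) (hy : y ≤ 1) : 1 - 1 / 2 ^ s ≤ qs s y := by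
  have hD := D_pos s
  have h1 : (∫ t in (0:ℝ)..0.9, t ^ s * (1 - t) ^ s) ≤ ∫ t in (0:ℝ)..y, t ^ s * (1 - t) ^ s :=
    I_mono s (by norm_num) h0 hy
  have h2 := I_split s 0.9 1
  have h3 := tail_le s
  have h4 : 1 - (0.1 * 0.09 ^ s) / (0.2 * 0.24 ^ s) ≤ qs s y := by
    rw [qs, le_div_iff₀ hD]
    have hDg := D_ge s
    have hpos : (0:ℝ) < 0.2 * 0.24 ^ s := by positivity
    have : (0.1 * 0.09 ^ s) / (0.2 * 0.24 ^ s) * (∫ t in (0:ℝ)..1, t ^ s * (1 - t) ^ s)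
        ≥ 0.1 * 0.09 ^ s := by
      rw [ge_iff_le, div_mul_eq_mul_div, le_div_iff₀ hpos]
      have hnn : (0:ℝ) ≤ 0.1 * 0.09 ^ s := by positivity
      nlinarith
    nlinarith
  have := key_ratio s
  linarith

end QsAux

/-- If `q` is a polynomial mapping `[0,1]` to `[0,1]`, with `q ≥ 0.9` on `[c₁,1]` and
`q ≤ 0.1` on `[0,c₂]`, then `f = q_s ∘ q` maps `[0,1]` to `[0,1]` and satisfies
`|f(x) − H_{c₁,c₂}(x)| ≤ 2^{−s}` for all `x ∈ [0,c₂] ∪ [c₁,1]`. -/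
theorem composite_polynomial_step_approx (c₁ c₂ : ℝ)
    (hc2 : 0 ≤ c₂) (hc : c₂ < c₁) (hc1 : c₁ ≤ 1)
    (s : ℕ) (q : Polynomial ℝ)
    (hq01 : ∀ x ∈ Set.Icc (0 : ℝ) 1, q.eval x ∈ Set.Icc (0 : ℝ) 1)
    (hqhi : ∀ x ∈ Set.Icc c₁ 1, 1 - 0.1 ≤ q.eval x)
    (hqlo : ∀ x ∈ Set.Icc (0 : ℝ) c₂, q.eval x ≤ 0.1) :
    (∀ x ∈ Set.Icc (0 : ℝ) 1, qs s (q.eval x) ∈ Set.Icc (0 : ℝ) 1)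
      ∧ ∀ x ∈ Set.Icc (0 : ℝ) c₂ ∪ Set.Icc c₁ 1,
          |qs s (q.eval x) - Hfun c₁ c₂ x| ≤ 1 / 2 ^ s := by
  constructor
  · intro x hx
    exact QsAux.qs_mem s (hq01 x hx).1 (hq01 x hx).2
  · intro x hx
    rcases hx with hx | hx
    · -- x ∈ [0, c₂]
      have hx01 : x ∈ Set.Icc (0:ℝ) 1 := ⟨hx.1, by linarith [hx.2]⟩
      have hq0 : 0 ≤ q.eval x := (hq01 x hx01).1
      have hqle : q.eval x ≤ 0.1 := hqlo x hx
      have hH : Hfun c₁ c₂ x = 0 := by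
        unfold Hfun
        rw [if_neg (by linarith [hx.2] : ¬ c₁ < x)]
        rcases lt_or_eq_of_le hx.2 with h | h
        · rw [if_pos h]
        · rw [if_neg (by linarith : ¬ x < c₂), h, sub_self, zero_div]
      rw [hH, sub_zero, abs_of_nonneg (QsAux.qs_mem s hq0 (by linarith [(hq01 x hx01).2])).1]
      exact QsAux.qs_lo s hq0 hqle
    · -- x ∈ [c₁, 1]
      have hx01 : x ∈ Set.Icc (0:ℝ) 1 := ⟨by linarith [hx.1], hx.2⟩
      have hq1 : q.eval x ≤ 1 := (hq01 x hx01).2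
      have hqge : (0.9 : ℝ) ≤ q.eval x := by have := hqhi x hx; norm_num at this ⊢; linarith
      have hH : Hfun c₁ c₂ x = 1 := by
        unfold Hfun
        rcases lt_or_eq_of_le hx.1 with h | h
        · rw [if_pos h]
        · rw [if_neg (by linarith : ¬ c₁ < x), if_neg (by linarith : ¬ x < c₂), ← h]
          exact div_self (by linarith)
      rw [hH]
      have hmem := QsAux.qs_mem s (by linarith : (0:ℝ) ≤ q.eval x) hq1
      have hlo := QsAux.qs_hi s hqge hq1
      have hps : (0:ℝ) ≤ 1 / 2 ^ s := by positivity
      rw [abs_le]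
      exact ⟨by linarith, by linarith [hmem.2]⟩
end
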